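/- Suppose V is finite-dimensional over k and B is a nondegenerate contravariant symmetric k-bilinear form on V. Then the orthogonal of the socle of V equals the radical of V: (soc V)^⊥ = rad V, where soc V is the sum of all simple A-submodules of V and rad V is the intersection of all maximal A-submodules of V. -/

import Mathlib

/-!
Contravariance makes the orthogonal of an `A`-submodule an `A`-submodule, and nondegeneracy
together with finite dimension makes `W ↦ Wᗮ` an involution. Hence it is an order-reversing
bijection of the lattice of `A`-submodules: it exchanges minimal nonzero submodules (the simple
ones) with maximal proper ones, and turns the supremum of the former into the infimum of the latter.
-/

theorem OrderIso.ofDual_map_sSup_setOf_isAtom {α β : Type*} [CompleteLattice α]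
    [CompleteLattice β] (e : α ≃o βᵒᵈ) :
    OrderDual.ofDual (e (sSup {a | IsAtom a})) = sInf {b | IsCoatom b} := by
  rw [e.map_sSup_eq_sSup_symm_preimage, ofDual_sSup]
  congr 1
  ext b
  simp only [Set.mem_preimage, Set.mem_ofPred_eq, e.symm.isAtom_iff, isAtom_dual_iff_isCoatom]

namespace LinearMap.BilinForm

variable {k A V : Type*} [Field k] [Ring A] [Algebra k A]
  [AddCommGroup V] [Module k V] [Module A V] [IsScalarTower k A V]
  (B : LinearMap.BilinForm k V) {τ : A → A} (hτ : Function.Involutive τ)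
  (hB : ∀ (a : A) (v w : V), B (a • v) w = B v (τ a • w))

def orthogonalSubmodule (W : Submodule A V) : Submodule A V where
  toAddSubmonoid := (B.orthogonal (W.restrictScalars k)).toAddSubmonoid
  smul_mem' a v hv u hu := by
    change B u (a • v) = 0
    rw [← hτ a, ← hB]
    exact hv _ (W.smul_mem (τ a) hu)

@[simp]
theorem restrictScalars_orthogonalSubmodule (W : Submodule A V) :
    (B.orthogonalSubmodule hτ hB W).restrictScalars k = B.orthogonal (W.restrictScalars k) :=
  rfl

theorem orthogonalSubmodule_antitone : Antitone (B.orthogonalSubmodule hτ hB) :=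
  fun _ _ h ↦ B.orthogonal_le (Submodule.restrictScalars_mono k h)

theorem orthogonalSubmodule_orthogonalSubmodule [FiniteDimensional k V] (hBnd : B.Nondegenerate)
    (hrefl : B.IsRefl) (W : Submodule A V) :
    B.orthogonalSubmodule hτ hB (B.orthogonalSubmodule hτ hB W) = W :=
  Submodule.restrictScalars_injective k A V <| by
    simp only [restrictScalars_orthogonalSubmodule, B.orthogonal_orthogonal hBnd hrefl]

def orthogonalOrderIso [FiniteDimensional k V] (hBnd : B.Nondegenerate) (hrefl : B.IsRefl) :
    Submodule A V ≃o (Submodule A V)ᵒᵈ where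
  toFun W := OrderDual.toDual (B.orthogonalSubmodule hτ hB W)
  invFun W := B.orthogonalSubmodule hτ hB (OrderDual.ofDual W)
  left_inv := B.orthogonalSubmodule_orthogonalSubmodule hτ hB hBnd hrefl
  right_inv := B.orthogonalSubmodule_orthogonalSubmodule hτ hB hBnd hrefl
  map_rel_iff' {W₁ W₂} := by
    change B.orthogonalSubmodule hτ hB W₂ ≤ B.orthogonalSubmodule hτ hB W₁ ↔ W₁ ≤ W₂
    refine ⟨fun h ↦ ?_, fun h ↦ B.orthogonalSubmodule_antitone hτ hB h⟩
    have := B.orthogonalSubmodule_antitone hτ hB h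
    rwa [B.orthogonalSubmodule_orthogonalSubmodule hτ hB hBnd hrefl,
      B.orthogonalSubmodule_orthogonalSubmodule hτ hB hBnd hrefl] at this

end LinearMap.BilinForm

theorem orthogonal_socle_eq_radical_general
    (k A V : Type*) [Field k] [Ring A] [Algebra k A]
    [AddCommGroup V] [Module k V] [Module A V] [IsScalarTower k A V]
    [FiniteDimensional k V]
    (τ : A → A)
    (hτinv : ∀ a : A, τ (τ a) = a)
    (B : LinearMap.BilinForm k V)
    (hB : ∀ (a : A) (v w : V), B (a • v) w = B v (τ a • w))
    (hBnd : B.Nondegenerate)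
    (hBsymm : ∀ v w : V, B v w = B w v) :
    B.orthogonal
        ((sSup {W : Submodule A V | IsSimpleModule A ↥W}).restrictScalars k) =
      (sInf {W : Submodule A V | IsCoatom W}).restrictScalars k := by
  have hrefl : B.IsRefl := fun v w h ↦ (hBsymm w v).trans h
  simp_rw [isSimpleModule_iff_isAtom]
  rw [← (B.orthogonalOrderIso hτinv hB hBnd hrefl).ofDual_map_sSup_setOf_isAtom]
  rfl

/-- Let `V` be finite-dimensional over `k` with a nondegenerate contravariant
symmetric `k`-bilinear form `B`.  Then the orthogonal of the socle of `V` (the sum of all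
simple `A`-submodules) equals the radical of `V` (the intersection of all maximal proper
`A`-submodules): `(soc V)^⊥ = rad V`. -/
theorem orthogonal_socle_eq_radical
    (k A V : Type*) [Field k] [Ring A] [Algebra k A]
    [AddCommGroup V] [Module k V] [Module A V] [IsScalarTower k A V]
    [FiniteDimensional k V]
    (τ : A → A)
    (hτadd : ∀ a b : A, τ (a + b) = τ a + τ b)
    (hτmul : ∀ a b : A, τ (a * b) = τ b * τ a)
    (hτalg : ∀ c : k, τ (algebraMap k A c) = algebraMap k A c)
    (hτinv : ∀ a : A, τ (τ a) = a)
    (B : LinearMap.BilinForm k V)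
    (hB : ∀ (a : A) (v w : V), B (a • v) w = B v (τ a • w))
    (hBnd : B.Nondegenerate)
    (hBsymm : ∀ v w : V, B v w = B w v) :
    B.orthogonal
        ((sSup {W : Submodule A V | IsSimpleModule A ↥W}).restrictScalars k) =
      (sInf {W : Submodule A V | IsCoatom W}).restrictScalars k :=
  orthogonal_socle_eq_radical_general k A V τ hτinv B hB hBnd hBsymm
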